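/- The concatenation map sends R_p × R_q injectively into the set of multisegments in R_{p+q} having a special full column at p. -/

import Mathlib

/-!
The segments of `concatMS p q M N` containing the column `p` are the glued ones. Their starts are
the starts of the segments of `M` ending at `p` together with `q` ones, their ends (shifted by `p`)
are the ends of the segments of `N` starting at `1` together with `p` copies of `q`; each side has
`p + q + 1` elements, which yields the weights of the concatenation and the fullness of column `p`.
Zipping decreasing starts with increasing ends makes the glued segments a chain under inclusion.
The remaining segments are those of `M` ending before `p` and the shifted segments of `N` starting
after `1`, so `M` and `N` are read back off the concatenation, which gives injectivity.
-/

/-- A segment is an interval `[i,j]` of positive integers, encoded as the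
pair `(i, j)` with `1 ≤ i ≤ j`.  A multisegment is a multiset of segments. -/
abbrev Seg := ℕ × ℕ

/-- The weight of the multisegment `M` at `k`: the number of segments of `M`
containing `k`. -/
def wt (M : Multiset Seg) (k : ℕ) : ℕ :=
  (M.filter (fun s => s.1 ≤ k ∧ k ≤ s.2)).card

/-- `M` belongs to `R_n`: all its members are segments contained in `[1,n]`,
and its weight is `(n+1, …, n+1)`. -/
def InR (n : ℕ) (M : Multiset Seg) : Prop :=
  (∀ s ∈ M, 1 ≤ s.1 ∧ s.1 ≤ s.2 ∧ s.2 ≤ n) ∧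
  ∀ k, 1 ≤ k → k ≤ n → wt M k = n + 1

/-- Concatenation of multisegments `M ∈ R_p` and `N ∈ R_q`: keep the segments
of `M` ending before `p` and those of `N` (shifted by `p`) starting after `1`,
and glue the segments of `M` ending at `p` (padded with `q` copies of `[1,p]`)
to the segments of `N` starting at `1` (padded with `p` copies of `[1,q]`),
matching shortest with shortest. -/
def concatMS (p q : ℕ) (M N : Multiset Seg) : Multiset Seg :=
  if p = 0 then N
  else if q = 0 then M
  else
    M.filter (fun s => s.2 < p)
      + (N.filter (fun s => 1 < s.1)).map (fun s => (s.1 + p, s.2 + p))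
      + ↑(List.map (fun x : ℕ × ℕ => (x.1, x.2 + p))
          (List.zip
            ((((M.filter (fun s : Seg => s.2 = p)).map Prod.fst
                + Multiset.replicate q 1).sort (· ≤ ·)).reverse)
            ((((N.filter (fun s : Seg => s.1 = 1)).map Prod.snd
                + Multiset.replicate p q).sort (· ≤ ·)))))

/-- Suspension of a multisegment `M ∈ R_n`: each segment is pushed inward
(`[i,j] ↦ [i+1,j+1]`, keeping start `1` at `1` and sending end `n` to `n+2`)
and the four segments `[1,1]`, `[2,n+2]`, `[1,n+1]`, `[n+2,n+2]` are added;
the suspension of the empty multisegment is `{[1,1],[2,2],[1,2]}`. -/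
def suspMS (n : ℕ) (M : Multiset Seg) : Multiset Seg :=
  if n = 0 then {(1, 1), (2, 2), (1, 2)}
  else
    M.map (fun s => (if s.1 = 1 then 1 else s.1 + 1, if s.2 = n then n + 2 else s.2 + 1))
      + {(1, 1), (2, n + 2), (1, n + 1), (n + 2, n + 2)}

/-- The `k`-th column of `M` is full: the number of segments of `M` containing
both `k` and `k+1` equals `min (w_k, w_{k+1})`. -/
def fullAt (M : Multiset Seg) (k : ℕ) : Prop :=
  (M.filter (fun s : Seg => s.1 ≤ k ∧ k + 1 ≤ s.2)).card = min (wt M k) (wt M (k + 1))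

/-- `M` has a special full column at `k`: the `k`-th column is full and any
two segments of `M` containing the column `k` are comparable by inclusion. -/
def specialFullAt (M : Multiset Seg) (k : ℕ) : Prop :=
  fullAt M k ∧ ∀ A ∈ M, ∀ B ∈ M, (A.1 ≤ k ∧ k + 1 ≤ A.2) → (B.1 ≤ k ∧ k + 1 ≤ B.2) →
    ((B.1 ≤ A.1 ∧ A.2 ≤ B.2) ∨ (A.1 ≤ B.1 ∧ B.2 ≤ A.2))

theorem List.Pairwise.zip {α β : Type*} {R : α → α → Prop} {S : β → β → Prop} :
    ∀ {l₁ : List α} {l₂ : List β}, l₁.Pairwise R → l₂.Pairwise S →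
      (l₁.zip l₂).Pairwise (fun x y => R x.1 y.1 ∧ S x.2 y.2)
  | [], _, _, _ => List.Pairwise.nil
  | _ :: _, [], _, _ => List.Pairwise.nil
  | _ :: _, _ :: _, h₁, h₂ => by
    rw [List.pairwise_cons] at h₁ h₂
    refine List.Pairwise.cons (fun x hx => ?_) (h₁.2.zip h₂.2)
    exact ⟨h₁.1 _ (List.of_mem_zip hx).1, h₂.1 _ (List.of_mem_zip hx).2⟩

theorem List.Pairwise.rel_or_rel {α : Type*} {R : α → α → Prop} {l : List α}
    (hR : ∀ x ∈ l, R x x) (h : l.Pairwise R) {a b : α} (ha : a ∈ l) (hb : b ∈ l) :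
    R a b ∨ R b a := by
  have : Std.Symm fun x y => R x y ∨ R y x := ⟨fun _ _ => Or.symm⟩
  exact (h.imp Or.inl).forall_of_forall (R := fun x y => R x y ∨ R y x)
    (fun x hx => Or.inl (hR x hx)) ha hb

theorem Multiset.eq_of_map_fst_eq {α β : Type*} {X Y : Multiset (α × β)} {c : β}
    (hX : ∀ s ∈ X, s.2 = c) (hY : ∀ s ∈ Y, s.2 = c) (h : X.map Prod.fst = Y.map Prod.fst) :
    X = Y := by
  have key : ∀ Z : Multiset (α × β), (∀ s ∈ Z, s.2 = c) → (Z.map Prod.fst).map (·, c) = Z :=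
    fun Z hZ => by
      conv_rhs => rw [← Z.map_id]
      rw [Multiset.map_map]
      exact Multiset.map_congr rfl fun s hs => Prod.ext rfl (hZ s hs).symm
  rw [← key X hX, h, key Y hY]

theorem Multiset.eq_of_map_snd_eq {α β : Type*} {X Y : Multiset (α × β)} {c : α}
    (hX : ∀ s ∈ X, s.1 = c) (hY : ∀ s ∈ Y, s.1 = c) (h : X.map Prod.snd = Y.map Prod.snd) :
    X = Y := by
  have key : ∀ Z : Multiset (α × β), (∀ s ∈ Z, s.1 = c) → (Z.map Prod.snd).map (c, ·) = Z :=
    fun Z hZ => by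
      conv_rhs => rw [← Z.map_id]
      rw [Multiset.map_map]
      exact Multiset.map_congr rfl fun s hs => Prod.ext (hZ s hs).symm rfl
  rw [← key X hX, h, key Y hY]

section Weight

variable {M N : Multiset Seg} {k : ℕ}

theorem wt_add (M N : Multiset Seg) (k : ℕ) : wt (M + N) k = wt M k + wt N k := by
  simp only [wt, Multiset.filter_add, Multiset.card_add]

theorem wt_eq_zero (h : ∀ s ∈ M, k < s.1 ∨ s.2 < k) : wt M k = 0 :=
  Multiset.card_eq_zero.2 <| Multiset.filter_eq_nil.2 fun s hs => by have := h s hs; omega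

theorem wt_map_shift (M : Multiset Seg) (p k : ℕ) :
    wt (M.map fun s : Seg => (s.1 + p, s.2 + p)) (k + p) = wt M k := by
  simp only [wt, Multiset.filter_map, Multiset.card_map]
  congr 1
  exact Multiset.filter_congr fun s _ => by simp

theorem wt_eq_card_filter_fst (h : ∀ s ∈ M, k ≤ s.2) :
    wt M k = Multiset.card ((M.map Prod.fst).filter (· ≤ k)) := by
  rw [wt, Multiset.filter_map, Multiset.card_map]
  exact congrArg _ (Multiset.filter_congr fun s hs => by simp [h s hs])

theorem wt_eq_card_filter_snd (h : ∀ s ∈ M, s.1 ≤ k) :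
    wt M k = Multiset.card ((M.map Prod.snd).filter (k ≤ ·)) := by
  rw [wt, Multiset.filter_map, Multiset.card_map]
  exact congrArg _ (Multiset.filter_congr fun s hs => by simp [h s hs])

end Weight

namespace InR

variable {n : ℕ} {M : Multiset Seg}

theorem filter_lt_add_filter_eq (hM : InR n M) :
    M.filter (fun s : Seg => s.2 < n) + M.filter (fun s : Seg => s.2 = n) = M := by
  conv_rhs => rw [← Multiset.filter_add_not (fun s : Seg => s.2 < n) M]
  exact congrArg _ <| Multiset.filter_congr fun s hs => by have := (hM.1 s hs).2.2; omega

theorem filter_one_lt_add_filter_eq (hM : InR n M) :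
    M.filter (fun s : Seg => 1 < s.1) + M.filter (fun s : Seg => s.1 = 1) = M := by
  conv_rhs => rw [← Multiset.filter_add_not (fun s : Seg => 1 < s.1) M]
  exact congrArg _ <| Multiset.filter_congr fun s hs => by have := (hM.1 s hs).1; omega

theorem card_filter_snd_eq (hn : 1 ≤ n) (hM : InR n M) :
    Multiset.card (M.filter (fun s : Seg => s.2 = n)) = n + 1 := by
  rw [← hM.2 n hn le_rfl, wt]
  exact congrArg _ <| Multiset.filter_congr fun s hs => by have := hM.1 s hs; omega

theorem card_filter_fst_eq (hn : 1 ≤ n) (hM : InR n M) :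
    Multiset.card (M.filter (fun s : Seg => s.1 = 1)) = n + 1 := by
  rw [← hM.2 1 le_rfl hn, wt]
  exact congrArg _ <| Multiset.filter_congr fun s hs => by have := hM.1 s hs; omega

end InR

section Concat

variable {p q : ℕ} {M N : Multiset Seg}

def gluedStarts (p q : ℕ) (M : Multiset Seg) : Multiset ℕ :=
  (M.filter (fun s : Seg => s.2 = p)).map Prod.fst + Multiset.replicate q 1

def gluedEnds (p q : ℕ) (N : Multiset Seg) : Multiset ℕ :=
  (N.filter (fun s : Seg => s.1 = 1)).map Prod.snd + Multiset.replicate p q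

def gluedList (p q : ℕ) (M N : Multiset Seg) : List Seg :=
  (((gluedStarts p q M).sort (· ≤ ·)).reverse.zip ((gluedEnds p q N).sort (· ≤ ·))).map
    fun x => (x.1, x.2 + p)

theorem concatMS_of_pos (hp : 1 ≤ p) (hq : 1 ≤ q) :
    concatMS p q M N = M.filter (fun s : Seg => s.2 < p)
      + (N.filter (fun s : Seg => 1 < s.1)).map (fun s : Seg => (s.1 + p, s.2 + p))
      + ↑(gluedList p q M N) := by
  rw [concatMS, if_neg (by omega), if_neg (by omega)]
  rfl

theorem mem_gluedStarts (hp : 1 ≤ p) (hM : InR p M) {a : ℕ} (ha : a ∈ gluedStarts p q M) :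
    1 ≤ a ∧ a ≤ p := by
  rcases Multiset.mem_add.1 ha with ha | ha
  · obtain ⟨s, hs, rfl⟩ := Multiset.mem_map.1 ha
    rw [Multiset.mem_filter] at hs
    have := hM.1 s hs.1
    omega
  · rw [Multiset.eq_of_mem_replicate ha]
    exact ⟨le_rfl, hp⟩

theorem mem_gluedEnds (hq : 1 ≤ q) (hN : InR q N) {b : ℕ} (hb : b ∈ gluedEnds p q N) :
    1 ≤ b ∧ b ≤ q := by
  rcases Multiset.mem_add.1 hb with hb | hb
  · obtain ⟨s, hs, rfl⟩ := Multiset.mem_map.1 hb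
    rw [Multiset.mem_filter] at hs
    have := hN.1 s hs.1
    omega
  · rw [Multiset.eq_of_mem_replicate hb]
    exact ⟨hq, le_rfl⟩

theorem card_gluedStarts (hp : 1 ≤ p) (hM : InR p M) :
    Multiset.card (gluedStarts p q M) = p + q + 1 := by
  rw [gluedStarts, Multiset.card_add, Multiset.card_map, Multiset.card_replicate,
    hM.card_filter_snd_eq hp]
  omega

theorem card_gluedEnds (hq : 1 ≤ q) (hN : InR q N) :
    Multiset.card (gluedEnds p q N) = p + q + 1 := by
  rw [gluedEnds, Multiset.card_add, Multiset.card_map, Multiset.card_replicate,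
    hN.card_filter_fst_eq hq]
  omega

theorem map_fst_gluedList (hp : 1 ≤ p) (hq : 1 ≤ q) (hM : InR p M) (hN : InR q N) :
    (gluedList p q M N : Multiset Seg).map Prod.fst = gluedStarts p q M := by
  have hlen : ((gluedStarts p q M).sort (· ≤ ·)).reverse.length
      ≤ ((gluedEnds p q N).sort (· ≤ ·)).length := by
    simp only [List.length_reverse, Multiset.length_sort, card_gluedStarts hp hM,
      card_gluedEnds hq hN, le_refl]
  rw [gluedList, Multiset.map_coe, List.map_map,
    show (Prod.fst ∘ fun x : ℕ × ℕ => (x.1, x.2 + p)) = Prod.fst from rfl,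
    List.map_fst_zip hlen, Multiset.coe_reverse, Multiset.sort_eq]

theorem map_snd_gluedList (hp : 1 ≤ p) (hq : 1 ≤ q) (hM : InR p M) (hN : InR q N) :
    (gluedList p q M N : Multiset Seg).map Prod.snd = (gluedEnds p q N).map (· + p) := by
  have hlen : ((gluedEnds p q N).sort (· ≤ ·)).length
      ≤ ((gluedStarts p q M).sort (· ≤ ·)).reverse.length := by
    simp only [List.length_reverse, Multiset.length_sort, card_gluedStarts hp hM,
      card_gluedEnds hq hN, le_refl]
  rw [gluedList, Multiset.map_coe, List.map_map,
    show (Prod.snd ∘ fun x : ℕ × ℕ => (x.1, x.2 + p)) = (· + p) ∘ Prod.snd from rfl,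
    ← List.map_map, List.map_snd_zip hlen, ← Multiset.map_coe, Multiset.sort_eq]

theorem mem_gluedList (hp : 1 ≤ p) (hq : 1 ≤ q) (hM : InR p M) (hN : InR q N) {s : Seg}
    (hs : s ∈ gluedList p q M N) : 1 ≤ s.1 ∧ s.1 ≤ p ∧ p < s.2 ∧ s.2 ≤ p + q := by
  have hs' : s ∈ (gluedList p q M N : Multiset Seg) := hs
  have h₁ := Multiset.mem_map_of_mem Prod.fst hs'
  have h₂ := Multiset.mem_map_of_mem Prod.snd hs'
  rw [map_fst_gluedList hp hq hM hN] at h₁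
  rw [map_snd_gluedList hp hq hM hN] at h₂
  obtain ⟨b, hb, hbs⟩ := Multiset.mem_map.1 h₂
  have := mem_gluedStarts hp hM h₁
  have := mem_gluedEnds hq hN hb
  omega

theorem gluedList_pairwise_subset (p q : ℕ) (M N : Multiset Seg) :
    (gluedList p q M N).Pairwise fun A B => B.1 ≤ A.1 ∧ A.2 ≤ B.2 := by
  have hstarts := List.pairwise_reverse.2 (Multiset.pairwise_sort (gluedStarts p q M) (· ≤ ·))
  have hends := Multiset.pairwise_sort (gluedEnds p q N) (· ≤ ·)
  exact List.Pairwise.map _ (fun x y h => ⟨h.1, Nat.add_le_add_right h.2 p⟩)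
    (hstarts.zip hends)


theorem wt_gluedList_of_le (hp : 1 ≤ p) (hq : 1 ≤ q) (hM : InR p M) (hN : InR q N) {k : ℕ}
    (hk : 1 ≤ k) (hkp : k ≤ p) :
    wt (gluedList p q M N) k = wt (M.filter fun s : Seg => s.2 = p) k + q := by
  have hG : ∀ s ∈ (gluedList p q M N : Multiset Seg), k ≤ s.2 := fun s hs => by
    have := mem_gluedList hp hq hM hN hs; omega
  have hE : ∀ s ∈ M.filter (fun s : Seg => s.2 = p), k ≤ s.2 := fun s hs =>
    (Multiset.mem_filter.1 hs).2 ▸ hkp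
  rw [wt_eq_card_filter_fst hG, map_fst_gluedList hp hq hM hN, wt_eq_card_filter_fst hE,
    gluedStarts, Multiset.filter_add, Multiset.card_add,
    (Multiset.filter_eq_self (s := Multiset.replicate q 1)).2 fun a ha =>
      Multiset.eq_of_mem_replicate ha ▸ hk,
    Multiset.card_replicate]

theorem wt_gluedList_add (hp : 1 ≤ p) (hq : 1 ≤ q) (hM : InR p M) (hN : InR q N) {j : ℕ}
    (hj : 1 ≤ j) (hjq : j ≤ q) :
    wt (gluedList p q M N) (j + p) = wt (N.filter fun s : Seg => s.1 = 1) j + p := by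
  have hG : ∀ s ∈ (gluedList p q M N : Multiset Seg), s.1 ≤ j + p := fun s hs => by
    have := mem_gluedList hp hq hM hN hs; omega
  have hB : ∀ s ∈ N.filter (fun s : Seg => s.1 = 1), s.1 ≤ j := fun s hs =>
    (Multiset.mem_filter.1 hs).2 ▸ hj
  rw [wt_eq_card_filter_snd hG, map_snd_gluedList hp hq hM hN, Multiset.filter_map,
    Multiset.card_map, wt_eq_card_filter_snd hB, gluedEnds,
    Multiset.filter_congr (q := (j ≤ ·)) fun b _ => by simp, Multiset.filter_add,
    Multiset.card_add,
    (Multiset.filter_eq_self (s := Multiset.replicate p q)).2 fun b hb =>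
      Multiset.eq_of_mem_replicate hb ▸ hjq,
    Multiset.card_replicate]

theorem mem_shifted (hN : InR q N) {s : Seg}
    (hs : s ∈ (N.filter fun s : Seg => 1 < s.1).map fun s : Seg => (s.1 + p, s.2 + p)) :
    p + 1 < s.1 ∧ s.1 ≤ s.2 ∧ s.2 ≤ p + q := by
  obtain ⟨t, ht, rfl⟩ := Multiset.mem_map.1 hs
  rw [Multiset.mem_filter] at ht
  have := hN.1 t ht.1
  dsimp only
  omega

theorem wt_concatMS (hp : 1 ≤ p) (hq : 1 ≤ q) (hM : InR p M) (hN : InR q N) {k : ℕ}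
    (hk : 1 ≤ k) (hkpq : k ≤ p + q) : wt (concatMS p q M N) k = p + q + 1 := by
  rw [concatMS_of_pos hp hq, wt_add, wt_add]
  rcases le_or_gt k p with hkp | hpk
  · have hwt := hM.2 k hk hkp
    rw [← hM.filter_lt_add_filter_eq, wt_add] at hwt
    rw [wt_eq_zero (M := Multiset.map _ _) fun s hs => by have := mem_shifted hN hs; omega,
      wt_gluedList_of_le hp hq hM hN hk hkp]
    omega
  · obtain ⟨j, rfl⟩ : ∃ j, k = j + p := ⟨k - p, by omega⟩
    have hwt := hN.2 j (by omega) (by omega)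
    rw [← hN.filter_one_lt_add_filter_eq, wt_add] at hwt
    rw [wt_eq_zero (M := Multiset.filter _ M) fun s hs => by
        have := (Multiset.mem_filter.1 hs).2; omega,
      wt_map_shift, wt_gluedList_add hp hq hM hN (by omega) (by omega)]
    omega

theorem InR.concatMS (hp : 1 ≤ p) (hq : 1 ≤ q) (hM : InR p M) (hN : InR q N) :
    InR (p + q) (concatMS p q M N) := by
  refine ⟨fun s hs => ?_, fun k hk hkpq => wt_concatMS hp hq hM hN hk hkpq⟩
  rw [concatMS_of_pos hp hq, Multiset.mem_add, Multiset.mem_add] at hs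
  rcases hs with (hs | hs) | hs
  · have := hM.1 s (Multiset.mem_filter.1 hs).1; omega
  · have := mem_shifted hN hs; omega
  · have := mem_gluedList hp hq hM hN hs; omega

theorem filter_column_concatMS (hp : 1 ≤ p) (hq : 1 ≤ q) (hM : InR p M) (hN : InR q N) :
    (concatMS p q M N).filter (fun s : Seg => s.1 ≤ p ∧ p + 1 ≤ s.2) = gluedList p q M N := by
  rw [concatMS_of_pos hp hq, Multiset.filter_add, Multiset.filter_add,
    Multiset.filter_eq_nil.2 fun s hs => by have := (Multiset.mem_filter.1 hs).2; omega,
    Multiset.filter_eq_nil.2 fun s hs => by have := mem_shifted hN hs; omega,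
    Multiset.filter_eq_self.2 fun s hs => by have := mem_gluedList hp hq hM hN hs; omega,
    zero_add, zero_add]

theorem specialFullAt_concatMS (hp : 1 ≤ p) (hq : 1 ≤ q) (hM : InR p M) (hN : InR q N) :
    specialFullAt (concatMS p q M N) p := by
  have hcol := filter_column_concatMS hp hq hM hN
  refine ⟨?_, fun A hA B hB hAp hBp => ?_⟩
  · have hcard : (gluedList p q M N).length = p + q + 1 := by
      rw [← Multiset.coe_card, ← Multiset.card_map Prod.fst, map_fst_gluedList hp hq hM hN,
        card_gluedStarts hp hM]
    rw [fullAt, hcol, Multiset.coe_card, hcard, wt_concatMS hp hq hM hN hp (by omega),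
      wt_concatMS hp hq hM hN (by omega) (by omega), min_self]
  · have hA' : A ∈ gluedList p q M N := by
      rw [← Multiset.mem_coe, ← hcol]; exact Multiset.mem_filter.2 ⟨hA, hAp⟩
    have hB' : B ∈ gluedList p q M N := by
      rw [← Multiset.mem_coe, ← hcol]; exact Multiset.mem_filter.2 ⟨hB, hBp⟩
    exact (gluedList_pairwise_subset p q M N).rel_or_rel (fun _ _ => ⟨le_rfl, le_rfl⟩) hA' hB'

theorem filter_snd_lt_concatMS (hp : 1 ≤ p) (hq : 1 ≤ q) (hM : InR p M) (hN : InR q N) :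
    (concatMS p q M N).filter (fun s : Seg => s.2 < p) = M.filter fun s : Seg => s.2 < p := by
  rw [concatMS_of_pos hp hq, Multiset.filter_add, Multiset.filter_add,
    (Multiset.filter_eq_self (s := M.filter _)).2 fun s hs => (Multiset.mem_filter.1 hs).2,
    (Multiset.filter_eq_nil (s := Multiset.map _ _)).2 fun s hs => by
      have := mem_shifted hN hs; omega,
    (Multiset.filter_eq_nil (s := (gluedList p q M N : Multiset Seg))).2 fun s hs => by
      have := mem_gluedList hp hq hM hN hs; omega,
    add_zero, add_zero]

theorem filter_fst_gt_concatMS (hp : 1 ≤ p) (hq : 1 ≤ q) (hM : InR p M) (hN : InR q N) :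
    (concatMS p q M N).filter (fun s : Seg => p < s.1)
      = (N.filter fun s : Seg => 1 < s.1).map fun s : Seg => (s.1 + p, s.2 + p) := by
  rw [concatMS_of_pos hp hq, Multiset.filter_add, Multiset.filter_add,
    (Multiset.filter_eq_nil (s := M.filter _)).2 fun s hs => by
      have := hM.1 s (Multiset.mem_filter.1 hs).1; have := (Multiset.mem_filter.1 hs).2; omega,
    (Multiset.filter_eq_self (s := Multiset.map _ _)).2 fun s hs => by
      have := mem_shifted hN hs; omega,
    (Multiset.filter_eq_nil (s := (gluedList p q M N : Multiset Seg))).2 fun s hs => by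
      have := mem_gluedList hp hq hM hN hs; omega,
    zero_add, add_zero]

variable {M' N' : Multiset Seg}

theorem eq_left_of_concatMS_eq (hp : 1 ≤ p) (hq : 1 ≤ q) (hM : InR p M) (hN : InR q N)
    (hM' : InR p M') (hN' : InR q N') (h : concatMS p q M N = concatMS p q M' N') : M = M' := by
  have hlt : M.filter (fun s : Seg => s.2 < p) = M'.filter fun s : Seg => s.2 < p := by
    rw [← filter_snd_lt_concatMS hp hq hM hN, h, filter_snd_lt_concatMS hp hq hM' hN']
  have hstarts : gluedStarts p q M = gluedStarts p q M' := by
    rw [← map_fst_gluedList hp hq hM hN, ← filter_column_concatMS hp hq hM hN, h,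
      filter_column_concatMS hp hq hM' hN', map_fst_gluedList hp hq hM' hN']
  have hend : M.filter (fun s : Seg => s.2 = p) = M'.filter fun s : Seg => s.2 = p :=
    Multiset.eq_of_map_fst_eq (fun s hs => (Multiset.mem_filter.1 hs).2)
      (fun s hs => (Multiset.mem_filter.1 hs).2) (add_left_injective _ hstarts)
  rw [← hM.filter_lt_add_filter_eq, ← hM'.filter_lt_add_filter_eq, hlt, hend]

theorem eq_right_of_concatMS_eq (hp : 1 ≤ p) (hq : 1 ≤ q) (hM : InR p M) (hN : InR q N)
    (hM' : InR p M') (hN' : InR q N') (h : concatMS p q M N = concatMS p q M' N') : N = N' := by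
  have hgt : N.filter (fun s : Seg => 1 < s.1) = N'.filter fun s : Seg => 1 < s.1 := by
    refine Multiset.map_injective (f := fun s : Seg => (s.1 + p, s.2 + p))
      (fun s t hst => by simpa [Prod.ext_iff] using hst) ?_
    rw [← filter_fst_gt_concatMS hp hq hM hN, h, filter_fst_gt_concatMS hp hq hM' hN']
  have hends : gluedEnds p q N = gluedEnds p q N' := by
    refine Multiset.map_injective (f := (· + p)) (add_left_injective p) ?_
    rw [← map_snd_gluedList hp hq hM hN, ← filter_column_concatMS hp hq hM hN, h,
      filter_column_concatMS hp hq hM' hN', map_snd_gluedList hp hq hM' hN']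
  have hbegin : N.filter (fun s : Seg => s.1 = 1) = N'.filter fun s : Seg => s.1 = 1 :=
    Multiset.eq_of_map_snd_eq (fun s hs => (Multiset.mem_filter.1 hs).2)
      (fun s hs => (Multiset.mem_filter.1 hs).2) (add_left_injective _ hends)
  rw [← hN.filter_one_lt_add_filter_eq, ← hN'.filter_one_lt_add_filter_eq, hgt, hbegin]

end Concat

/-- concatenation sends `R_p × R_q` injectively into the set of
multisegments of `R_{p+q}` having a special full column at `p`. -/
theorem concat_injective_special_full (p q : ℕ) (hp : 1 ≤ p) (hq : 1 ≤ q) :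
    (∀ M N : Multiset Seg, InR p M → InR q N →
      InR (p + q) (concatMS p q M N) ∧ specialFullAt (concatMS p q M N) p) ∧
    (∀ M N M' N' : Multiset Seg, InR p M → InR q N → InR p M' → InR q N' →
      concatMS p q M N = concatMS p q M' N' → M = M' ∧ N = N') :=
  ⟨fun _ _ hM hN => ⟨hM.concatMS hp hq hN, specialFullAt_concatMS hp hq hM hN⟩,
    fun _ _ _ _ hM hN hM' hN' h =>
      ⟨eq_left_of_concatMS_eq hp hq hM hN hM' hN' h,
        eq_right_of_concatMS_eq hp hq hM hN hM' hN' h⟩⟩
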